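/- arXiv:2404.18693 — 4 statements merged into one kernel-verified Lean document; each statement's English description precedes it below -/
import Mathlib

section
/- Let U be a Hausdorff topological space and let p, q : [0,1] → U be two non-constant regular paths such that p = q ∘ φ for some non-decreasing surjective continuous map φ : [0,1] → [0,1]. Then φ is a homeomorphism of [0,1] onto itself. -/
/- STATEMENT 5: Let U be Hausdorff and p, q : [0,1] → U two non-constant regular paths
with p = q ∘ φ for some non-decreasing surjective map φ : [0,1] → [0,1]. Then φ is a
homeomorphism of [0,1] onto itself. -/

open unitInterval

noncomputable section

variable {U : Type*} [TopologicalSpace U]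

/-- A path `γ : [0,1] → U` is regular if it is constant or if every subinterval on which
it is constant is degenerate. -/
def IsRegularPath (γ : I → U) : Prop :=
  (∀ s t : I, γ s = γ t) ∨
    ∀ a b : I, a ≤ b → (∀ t : I, a ≤ t → t ≤ b → γ t = γ a) → a = b

theorem regular_reparam_homeomorph [T2Space U] (p q : I → U) (φ : I → I)
    (hp : Continuous p) (hq : Continuous q)
    (hrp : IsRegularPath p) (hrq : IsRegularPath q)
    (hncp : ¬ ∀ s t : I, p s = p t) (hncq : ¬ ∀ s t : I, q s = q t)
    (hφmono : Monotone φ) (hφsurj : Function.Surjective φ)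
    (hpq : ∀ t : I, p t = q (φ t)) :
    ∃ e : I ≃ₜ I, ∀ t : I, e t = φ t := by
  have hreg : ∀ a b : I, a ≤ b → (∀ t : I, a ≤ t → t ≤ b → p t = p a) → a = b :=
    hrp.resolve_left hncp
  have hinj : Function.Injective φ := by
    intro a b hab
    rcases le_total a b with h | h
    · exact hreg a b h fun t hat htb => by
        have h1 : φ a ≤ φ t := hφmono hat
        have h2 : φ t ≤ φ b := hφmono htb
        have : φ t = φ a := le_antisymm (hab ▸ h2) h1
        rw [hpq, hpq, this]
    · exact (hreg b a h fun t hbt hta => by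
        have h1 : φ b ≤ φ t := hφmono hbt
        have h2 : φ t ≤ φ a := hφmono hta
        have : φ t = φ b := le_antisymm (hab ▸ h2) h1
        rw [hpq, hpq, this]).symm
  have hsm : StrictMono φ := hφmono.strictMono_of_injective hinj
  exact ⟨(StrictMono.orderIsoOfSurjective φ hsm hφsurj).toHomeomorph, fun t => rfl⟩

end
end

section
/- Let X be a multipointed d-space. Define d(X) to be the set of all constant paths [0,1] → |X| together with all Moore compositions of the form (γ₁∘φ₁∘μ_{ℓ₁}) * ⋯ * (γₙ∘φₙ∘μ_{ℓₙ}) with ℓ₁ + ⋯ + ℓₙ = 1, where each γᵢ is an execution path of X and each φᵢ : [0,1] → [0,1] is non-decreasing continuous. Then d(X) is closed under normalized composition: if Γ, Γ' ∈ d(X) with Γ(1) = Γ'(0), then Γ *_N Γ' ∈ d(X). -/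
/- STATEMENT 7: d(X) is closed under normalized composition. -/

open Set unitInterval

noncomputable section

variable {α : Type*} {β : Type*} [TopologicalSpace α] [TopologicalSpace β]

/-- Clamp a real number into the unit interval. -/
def toI (t : ℝ) : I := Set.projIcc 0 1 zero_le_one t

/-- Normalized composition of two paths parametrized by [0,1]. -/
def normComp (γ₁ γ₂ : I → α) : I → α :=
  fun t => if (t : ℝ) ≤ 1 / 2 then γ₁ (toI (2 * (t : ℝ))) else γ₂ (toI (2 * (t : ℝ) - 1))

/-- An element of `M(1,1)`: a non-decreasing (continuous) surjection of [0,1]. -/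
def IsReparam (φ : I → I) : Prop := Monotone φ ∧ Function.Surjective φ ∧ Continuous φ

/-- An element of `𝓘(1)`: a non-decreasing continuous map [0,1] → [0,1],
not necessarily surjective. -/
def IsNondecreasing (φ : I → I) : Prop := Monotone φ ∧ Continuous φ

/-- A multipointed d-space: a space, a set of states, and a set of execution paths with
endpoints in the states, closed under non-decreasing surjective reparametrization and
under normalized composition. -/
structure MultipointedDSpace (α : Type*) [TopologicalSpace α] where
  states : Set α
  exec : Set (I → α)
  exec_cont : ∀ γ ∈ exec, Continuous γ
  exec_src : ∀ γ ∈ exec, γ 0 ∈ states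
  exec_tgt : ∀ γ ∈ exec, γ 1 ∈ states
  exec_reparam : ∀ γ ∈ exec, ∀ φ : I → I, IsReparam φ → γ ∘ φ ∈ exec
  exec_norm : ∀ γ₁ ∈ exec, ∀ γ₂ ∈ exec, γ₁ 1 = γ₂ 0 → normComp γ₁ γ₂ ∈ exec

/-- Moore composition of a path of length `ℓ₁` with a second path. -/
def mooreComp (ℓ₁ : ℝ) (f g : ℝ → α) : ℝ → α := fun t => if t ≤ ℓ₁ then f t else g (t - ℓ₁)

/-- `(n+1)`-fold Moore composition with prescribed lengths. -/
def mooreCompN : (n : ℕ) → (Fin (n + 1) → ℝ) → (Fin (n + 1) → ℝ → α) → ℝ → α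
  | 0, _, f => f 0
  | n + 1, ℓ, f =>
      mooreComp (ℓ 0) (f 0) (mooreCompN n (fun i => ℓ i.succ) (fun i => f i.succ))

/-- `d(X)`: the set of all constant paths together with all Moore compositions
`(γ₁∘φ₁∘μ_{ℓ₁}) * ⋯ * (γₙ∘φₙ∘μ_{ℓₙ})` with `Σ ℓᵢ = 1`, where the `γᵢ` are execution
paths and the `φᵢ` are non-decreasing continuous self-maps of [0,1]
(`μ_ℓ(t) = t/ℓ`). -/
def dPaths (X : MultipointedDSpace α) : Set (I → α) :=
  {Γ | (∃ x, ∀ t, Γ t = x) ∨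
    ∃ (n : ℕ) (ℓ : Fin (n + 1) → ℝ) (γ : Fin (n + 1) → I → α) (φ : Fin (n + 1) → I → I),
      (∀ i, 0 < ℓ i) ∧ (∑ i, ℓ i = 1) ∧ (∀ i, γ i ∈ X.exec) ∧
      (∀ i, IsNondecreasing (φ i)) ∧
      ∀ t : I, Γ t = mooreCompN n ℓ (fun i s => γ i (φ i (toI (s / ℓ i)))) (t : ℝ)}

-- helpers
lemma toI_coe {x : ℝ} (h0 : 0 ≤ x) (h1 : x ≤ 1) : ((toI x : I) : ℝ) = x := by
  simp [toI, Set.coe_projIcc, max_eq_right, min_eq_right, h0, h1]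

def app {κ : Type*} {m : ℕ} : {n : ℕ} → (Fin (n+1) → κ) → (Fin (m+1) → κ) → Fin (m+n+2) → κ
  | 0, a, b => Fin.cons (a 0) b
  | n+1, a, b => Fin.cons (a 0) (app (fun j => a j.succ) b)

lemma app_forall {κ : Type*} {m : ℕ} {P : κ → Prop} :
    ∀ {n : ℕ} (a : Fin (n+1) → κ) (b : Fin (m+1) → κ),
      (∀ i, P (a i)) → (∀ i, P (b i)) → ∀ i, P (app a b i)
  | 0, a, b, ha, hb => fun i => i.cases (ha 0) hb
  | n+1, a, b, ha, hb => fun i =>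
      i.cases (ha 0) (app_forall (fun j => a j.succ) b (fun j => ha j.succ) hb)

lemma app_zip {κ₁ κ₂ κ₃ δ : Type*} {m : ℕ} (g : κ₁ → κ₂ → κ₃ → δ) :
    ∀ {n : ℕ} (a₁ : Fin (n+1) → κ₁) (a₂ : Fin (n+1) → κ₂) (a₃ : Fin (n+1) → κ₃)
      (b₁ : Fin (m+1) → κ₁) (b₂ : Fin (m+1) → κ₂) (b₃ : Fin (m+1) → κ₃) (i : Fin (m+n+2)),
      app (fun i => g (a₁ i) (a₂ i) (a₃ i)) (fun i => g (b₁ i) (b₂ i) (b₃ i)) i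
        = g (app a₁ b₁ i) (app a₂ b₂ i) (app a₃ b₃ i)
  | 0, a₁, a₂, a₃, b₁, b₂, b₃, i => i.cases rfl (fun _ => rfl)
  | n+1, a₁, a₂, a₃, b₁, b₂, b₃, i =>
      i.cases rfl (fun j => app_zip g (fun j => a₁ j.succ) (fun j => a₂ j.succ)
        (fun j => a₃ j.succ) b₁ b₂ b₃ j)

lemma sum_app {m : ℕ} : ∀ {n : ℕ} (a : Fin (n+1) → ℝ) (b : Fin (m+1) → ℝ),
    ∑ i, app a b i = (∑ i, a i) + ∑ i, b i
  | 0, a, b => by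
      show ∑ i, Fin.cons (α := fun _ => ℝ) (a 0) b i = _
      rw [Fin.sum_cons]
      simp [Fin.sum_univ_succ]
  | n+1, a, b => by
      show ∑ i, Fin.cons (α := fun _ => ℝ) (a 0) (app (fun j => a j.succ) b) i = _
      rw [Fin.sum_cons, sum_app (fun j => a j.succ) b, Fin.sum_univ_succ a]
      ring

lemma mooreCompN_zero (n : ℕ) (ℓ : Fin (n+1) → ℝ) (f : Fin (n+1) → ℝ → α)
    (h : 0 ≤ ℓ 0) : mooreCompN n ℓ f 0 = f 0 0 := by
  cases n with
  | zero => rfl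
  | succ n => simp [mooreCompN, mooreComp, h]

lemma mooreCompN_end : ∀ (n : ℕ) (ℓ : Fin (n+1) → ℝ) (f : Fin (n+1) → ℝ → α),
    (∀ i, 0 < ℓ i) →
    mooreCompN n ℓ f (∑ i, ℓ i) = f (Fin.last n) (ℓ (Fin.last n))
  | 0, ℓ, f, h => by simp [mooreCompN, Fin.last]
  | n+1, ℓ, f, h => by
      have hpos : 0 < ∑ i : Fin (n+1), ℓ i.succ :=
        Finset.sum_pos (fun i _ => h _) Finset.univ_nonempty
      simp only [mooreCompN, mooreComp]
      rw [Fin.sum_univ_succ, if_neg (by linarith), add_sub_cancel_left,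
        mooreCompN_end n _ _ (fun i => h i.succ), Fin.succ_last]

lemma mooreCompN_scale (c : ℝ) (hc : 0 < c) :
    ∀ (n : ℕ) (ℓ : Fin (n+1) → ℝ) (f : Fin (n+1) → ℝ → α) (t : ℝ),
    mooreCompN n (fun i => ℓ i / c) (fun i s => f i (c * s)) t = mooreCompN n ℓ f (c * t)
  | 0, ℓ, f, t => rfl
  | n+1, ℓ, f, t => by
      simp only [mooreCompN, mooreComp]
      rcases le_or_gt t (ℓ 0 / c) with h | h
      · rw [if_pos h, if_pos (by rw [le_div_iff₀ hc] at h; linarith)]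
      · rw [if_neg (not_le.2 h), if_neg (by rw [div_lt_iff₀ hc] at h; push_neg; linarith)]
        have := mooreCompN_scale c hc n (fun i => ℓ i.succ) (fun i => f i.succ) (t - ℓ 0 / c)
        rw [mul_sub, mul_div_cancel₀ _ (ne_of_gt hc)] at this
        exact this

lemma mooreCompN_app :
    ∀ (n : ℕ) {m : ℕ} (ℓ : Fin (n+1) → ℝ) (ℓ' : Fin (m+1) → ℝ)
      (f : Fin (n+1) → ℝ → α) (f' : Fin (m+1) → ℝ → α),
      (∀ i, 0 ≤ ℓ i) → ∀ (t : ℝ),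
    mooreCompN (m+n+1) (app ℓ ℓ') (app f f') t =
      if t ≤ ∑ i, ℓ i then mooreCompN n ℓ f t
      else mooreCompN m ℓ' f' (t - ∑ i, ℓ i)
  | 0, m, ℓ, ℓ', f, f', hℓ, t => by
      have hL : mooreCompN (m+0+1) (app ℓ ℓ') (app f f') t
          = mooreComp (ℓ 0) (f 0) (mooreCompN m ℓ' f') t := rfl
      rw [hL]
      have hss : (∑ i, ℓ i) = ℓ 0 := by simp [Fin.sum_univ_succ]
      rw [hss]
      rfl
  | n+1, m, ℓ, ℓ', f, f', hℓ, t => by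
      have hL : mooreCompN (m+(n+1)+1) (app ℓ ℓ') (app f f') t
          = mooreComp (ℓ 0) (f 0)
              (mooreCompN (m+n+1) (app (fun j : Fin (n+1) => ℓ j.succ) ℓ')
                (app (fun j : Fin (n+1) => f j.succ) f')) t := rfl
      rw [hL]
      have ih := mooreCompN_app n (fun j => ℓ j.succ) ℓ' (fun j => f j.succ) f'
        (fun i => hℓ i.succ) (t - ℓ 0)
      have hs : 0 ≤ ∑ i : Fin (n+1), ℓ i.succ :=
        Finset.sum_nonneg fun i _ => hℓ _
      rw [Fin.sum_univ_succ ℓ]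
      show (if t ≤ ℓ 0 then f 0 t
          else mooreCompN (m+n+1) (app (fun j : Fin (n+1) => ℓ j.succ) ℓ')
            (app (fun j : Fin (n+1) => f j.succ) f') (t - ℓ 0)) = _
      rw [ih, show mooreCompN (n+1) ℓ f t = (if t ≤ ℓ 0 then f 0 t
        else mooreCompN n (fun i => ℓ i.succ) (fun i => f i.succ) (t - ℓ 0)) from rfl]
      split_ifs <;> first | rfl | linarith | (congr 1; ring)

lemma rep_normComp (X : MultipointedDSpace α) {Γ Γ' : I → α} {n m : ℕ}
    (ℓ : Fin (n+1) → ℝ) (γ : Fin (n+1) → I → α) (φ : Fin (n+1) → I → I)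
    (ℓ' : Fin (m+1) → ℝ) (γ' : Fin (m+1) → I → α) (φ' : Fin (m+1) → I → I)
    (hp : ∀ i, 0 < ℓ i) (hs : ∑ i, ℓ i = 1) (he : ∀ i, γ i ∈ X.exec)
    (hn : ∀ i, IsNondecreasing (φ i))
    (hΓ : ∀ t : I, Γ t = mooreCompN n ℓ (fun i s => γ i (φ i (toI (s / ℓ i)))) (t : ℝ))
    (hp' : ∀ i, 0 < ℓ' i) (hs' : ∑ i, ℓ' i = 1) (he' : ∀ i, γ' i ∈ X.exec)
    (hn' : ∀ i, IsNondecreasing (φ' i))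
    (hΓ' : ∀ t : I, Γ' t = mooreCompN m ℓ' (fun i s => γ' i (φ' i (toI (s / ℓ' i)))) (t : ℝ)) :
    normComp Γ Γ' ∈ dPaths X := by
  right
  refine ⟨m+n+1, app (fun i => ℓ i / 2) (fun i => ℓ' i / 2), app γ γ', app φ φ',
    app_forall _ _ (fun i => by have := hp i; positivity) (fun i => by have := hp' i; positivity),
    ?_, app_forall _ _ he he', app_forall _ _ hn hn', ?_⟩
  · rw [sum_app, ← Finset.sum_div, ← Finset.sum_div, hs, hs']
    norm_num
  · intro t
    have hfun : (fun (i : Fin (m+n+2)) (s : ℝ) =>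
          app γ γ' i (app φ φ' i (toI (s / app (fun i => ℓ i / 2) (fun i => ℓ' i / 2) i))))
        = app (fun i s => γ i (φ i (toI (2 * s / ℓ i))))
            (fun i s => γ' i (φ' i (toI (2 * s / ℓ' i)))) := by
      funext i s
      have harg : ∀ i, s / app (fun i => ℓ i / 2) (fun i => ℓ' i / 2) i
          = 2 * s / app (fun i => ℓ i) (fun i => ℓ' i) i := by
        have hzz := app_zip (κ₁ := ℝ) (κ₂ := ℝ) (κ₃ := ℝ)
          (fun (l : ℝ) (_ : ℝ) (_ : ℝ) => l / 2) (fun i => ℓ i) ℓ ℓ (fun i => ℓ' i) ℓ' ℓ'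
        intro i
        rw [show app (fun i => ℓ i / 2) (fun i => ℓ' i / 2) i
            = app (fun i => ℓ i) (fun i => ℓ' i) i / 2 from hzz i]
        rw [div_div_eq_mul_div, mul_comm]
      rw [harg i]
      have hzz2 := app_zip (κ₁ := I → α) (κ₂ := I → I) (κ₃ := ℝ)
        (fun (g : I → α) (p : I → I) (l : ℝ) => fun s : ℝ => g (p (toI (2 * s / l))))
        γ φ (fun i => ℓ i) γ' φ' (fun i => ℓ' i) i
      exact (congrFun hzz2 s).symm
    rw [hfun]
    rw [mooreCompN_app n (fun i => ℓ i / 2) (fun i => ℓ' i / 2) _ _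
      (fun i => le_of_lt (by have := hp i; positivity)) (t : ℝ)]
    have hhalf : (∑ i, ℓ i / 2) = 1 / 2 := by rw [← Finset.sum_div, hs]
    rw [hhalf]
    have hsc : ∀ r : ℝ, mooreCompN n (fun i => ℓ i / 2)
        (fun i s => γ i (φ i (toI (2 * s / ℓ i)))) r
        = mooreCompN n ℓ (fun i s => γ i (φ i (toI (s / ℓ i)))) (2 * r) :=
      fun r => mooreCompN_scale 2 (by norm_num) n ℓ (fun i s => γ i (φ i (toI (s / ℓ i)))) r
    have hsc' : ∀ r : ℝ, mooreCompN m (fun i => ℓ' i / 2)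
        (fun i s => γ' i (φ' i (toI (2 * s / ℓ' i)))) r
        = mooreCompN m ℓ' (fun i s => γ' i (φ' i (toI (s / ℓ' i)))) (2 * r) :=
      fun r => mooreCompN_scale 2 (by norm_num) m ℓ' (fun i s => γ' i (φ' i (toI (s / ℓ' i)))) r
    have ht0 : (0:ℝ) ≤ (t:ℝ) := t.2.1
    have ht1 : (t:ℝ) ≤ 1 := t.2.2
    rw [normComp]
    split_ifs with h
    · rw [hΓ (toI (2 * (t:ℝ))), toI_coe (by linarith) (by linarith), hsc]
    · push_neg at h
      rw [hΓ' (toI (2 * (t:ℝ) - 1)), toI_coe (by linarith) (by linarith), hsc']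
      congr 1
      ring

theorem dPaths_normComp (X : MultipointedDSpace α) {Γ Γ' : I → α}
    (h : Γ ∈ dPaths X) (h' : Γ' ∈ dPaths X) (hc : Γ 1 = Γ' 0) :
    normComp Γ Γ' ∈ dPaths X := by
  rcases h with ⟨x, hx⟩ | ⟨n, ℓ, γ, φ, hp, hs, he, hn, hΓ⟩
  · rcases h' with ⟨x', hx'⟩ | ⟨m, ℓ', γ', φ', hp', hs', he', hn', hΓ'⟩
    · -- both constant
      left
      refine ⟨x, fun t => ?_⟩
      rw [normComp]
      split_ifs with h
      · exact hx _
      · rw [hx', ← hx' 0, ← hc, hx 1]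
    · -- const / rep : give Γ a representation
      have hx0 : x = γ' 0 (φ' 0 (toI 0)) := by
        have h0 := hΓ' 0
        rw [show ((0:I):ℝ) = 0 from rfl,
          mooreCompN_zero m ℓ' _ (le_of_lt (hp' 0)), zero_div] at h0
        exact (hx 1).symm.trans (hc.trans h0)
      apply rep_normComp X (n := 0) (m := m) (fun _ => 1) (fun _ => γ' 0)
        (fun _ _ => φ' 0 (toI 0)) ℓ' γ' φ'
        (fun _ => one_pos) (by simp) (fun _ => he' 0)
        (fun _ => ⟨monotone_const, continuous_const⟩) ?_ hp' hs' he' hn' hΓ'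
      intro t
      show Γ t = γ' 0 (φ' 0 (toI 0))
      rw [hx t, hx0]
  · rcases h' with ⟨x', hx'⟩ | ⟨m, ℓ', γ', φ', hp', hs', he', hn', hΓ'⟩
    · -- rep / const : give Γ' a representation
      have hΓ1 : Γ 1 = γ (Fin.last n) (φ (Fin.last n) (toI 1)) := by
        have h1 := hΓ 1
        rw [show ((1:I):ℝ) = 1 from rfl, ← hs, mooreCompN_end n _ _ hp,
          div_self (ne_of_gt (hp (Fin.last n)))] at h1
        exact h1
      apply rep_normComp X (n := n) (m := 0) ℓ γ φ (fun _ => 1)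
        (fun _ => γ (Fin.last n)) (fun _ _ => φ (Fin.last n) (toI 1))
        hp hs he hn hΓ (fun _ => one_pos) (by simp) (fun _ => he (Fin.last n))
        (fun _ => ⟨monotone_const, continuous_const⟩) ?_
      intro t
      show Γ' t = γ (Fin.last n) (φ (Fin.last n) (toI 1))
      rw [hx' t, ← hx' 0, ← hc, hΓ1]
    · exact rep_normComp X ℓ γ φ ℓ' γ' φ' hp hs he hn hΓ hp' hs' he' hn' hΓ'

end
end

section
/- Two small diagrams F : I → K and G : J → K in a category K are bisimilar if and only if they are related by a span of open maps in the category diag(K) of all small diagrams in K. -/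
/- STATEMENT 11: Two small diagrams F : I ⥤ K and G : J ⥤ K are bisimilar if and only
if they are related by a span of open maps in the category diag(K) of all small
diagrams in K. -/

open CategoryTheory

universe w v u

variable {K : Type u} [Category.{v} K]

/-- A map `(f, μ) : F → G` in `diag(K)` is open if `f` is surjective on objects, every
morphism `f(i) ⟶ j'` lifts to a morphism `i ⟶ j` with `f(j) = j'`, and `μ` is a
natural isomorphism. -/
def IsOpenDiagMap {I : Type*} [Category I] {J : Type*} [Category J]
    (F : I ⥤ K) (G : J ⥤ K) (f : I ⥤ J) (μ : F ⟶ f ⋙ G) : Prop :=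
  Function.Surjective f.obj ∧
    (∀ (i : I) (j' : J) (ψ : f.obj i ⟶ j'),
      ∃ (j : I) (φ : i ⟶ j) (h : f.obj j = j'), f.map φ ≫ eqToHom h = ψ) ∧
    IsIso μ

/-- Bisimilarity of two diagrams: there is a set of triples `(i, η, j)` with
`η : F(i) ≅ G(j)` covering all objects of both index categories and satisfying the
forward and backward transfer properties. -/
def Bisimilar {I : Type*} [Category I] {J : Type*} [Category J]
    (F : I ⥤ K) (G : J ⥤ K) : Prop :=
  ∃ R : Set ((i : I) × (j : J) × (F.obj i ≅ G.obj j)),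
    (∀ i : I, ∃ p ∈ R, p.1 = i) ∧
    (∀ j : J, ∃ p ∈ R, p.2.1 = j) ∧
    (∀ (i : I) (j : J) (η : F.obj i ≅ G.obj j), ⟨i, j, η⟩ ∈ R →
      ∀ (i' : I) (φ : i ⟶ i'),
        ∃ (j' : J) (η' : F.obj i' ≅ G.obj j') (ψ : j ⟶ j'),
          ⟨i', j', η'⟩ ∈ R ∧ F.map φ ≫ η'.hom = η.hom ≫ G.map ψ) ∧
    (∀ (i : I) (j : J) (η : F.obj i ≅ G.obj j), ⟨i, j, η⟩ ∈ R →
      ∀ (j' : J) (ψ : j ⟶ j'),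
        ∃ (i' : I) (η' : F.obj i' ≅ G.obj j') (φ : i ⟶ i'),
          ⟨i', j', η'⟩ ∈ R ∧ F.map φ ≫ η'.hom = η.hom ≫ G.map ψ)

/-!
A bisimulation is a set of objects of the comma category `F ↓ G` whose structure maps are
isomorphisms, and the two transfer conditions say precisely that the projections to `I` and `J`
of the full subcategory on these objects lift morphisms; so a bisimulation is a span of open
maps with apex that subcategory. Since the apex has to be `w`-small while the bisimulation need
not be, we pass to the sub-bisimulation reached from chosen seeds by chosen transfer steps,
indexed by formal sequences of moves. Conversely, the legs of a span of open maps give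
isomorphisms `F (f l) ≅ H l ≅ G (g l)`, and these triples form a bisimulation.
-/

section Bisimulation

variable {I J : Type*} [Category I] [Category J] (F : I ⥤ K) (G : J ⥤ K)

abbrev IsoTriple := (i : I) × (j : J) × (F.obj i ≅ G.obj j)

structure IsBisimulation (R : Set (IsoTriple F G)) : Prop where
  exists_fst : ∀ i : I, ∃ p ∈ R, p.1 = i
  exists_snd : ∀ j : J, ∃ p ∈ R, p.2.1 = j
  forth : ∀ p ∈ R, ∀ (i' : I) (φ : p.1 ⟶ i'),
    ∃ (j' : J) (η' : F.obj i' ≅ G.obj j') (ψ : p.2.1 ⟶ j'),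
      ⟨i', j', η'⟩ ∈ R ∧ F.map φ ≫ η'.hom = p.2.2.hom ≫ G.map ψ
  back : ∀ p ∈ R, ∀ (j' : J) (ψ : p.2.1 ⟶ j'),
    ∃ (i' : I) (η' : F.obj i' ≅ G.obj j') (φ : p.1 ⟶ i'),
      ⟨i', j', η'⟩ ∈ R ∧ F.map φ ≫ η'.hom = p.2.2.hom ≫ G.map ψ

theorem bisimilar_iff_exists_isBisimulation :
    Bisimilar F G ↔ ∃ R, IsBisimulation F G R := by
  constructor
  · rintro ⟨R, h_fst, h_snd, h_forth, h_back⟩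
    exact ⟨R, h_fst, h_snd, fun ⟨i, j, η⟩ => h_forth i j η, fun ⟨i, j, η⟩ => h_back i j η⟩
  · rintro ⟨R, h_fst, h_snd, h_forth, h_back⟩
    exact ⟨R, h_fst, h_snd, fun i j η => h_forth ⟨i, j, η⟩, fun i j η => h_back ⟨i, j, η⟩⟩

variable {F G}

theorem Bisimilar.of_isOpenDiagMap {L : Type*} [Category L] {H : L ⥤ K}
    {f : L ⥤ I} {μ : H ⟶ f ⋙ F} {g : L ⥤ J} {ν : H ⟶ g ⋙ G}
    (hf : IsOpenDiagMap H F f μ) (hg : IsOpenDiagMap H G g ν) : Bisimilar F G := by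
  obtain ⟨hf_surj, hf_lift, _⟩ := hf
  obtain ⟨hg_surj, hg_lift, _⟩ := hg
  let θ : f ⋙ F ≅ g ⋙ G := (asIso μ).symm ≪≫ asIso ν
  refine (bisimilar_iff_exists_isBisimulation F G).2
    ⟨Set.range fun l => ⟨f.obj l, g.obj l, θ.app l⟩, ⟨fun i => ?_, fun j => ?_, ?_, ?_⟩⟩
  · obtain ⟨l, rfl⟩ := hf_surj i
    exact ⟨_, ⟨l, rfl⟩, rfl⟩
  · obtain ⟨l, rfl⟩ := hg_surj j
    exact ⟨_, ⟨l, rfl⟩, rfl⟩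
  · rintro _ ⟨l, rfl⟩ i' φ
    obtain ⟨l', φ', rfl, rfl⟩ := hf_lift l i' φ
    exact ⟨_, _, g.map φ', ⟨l', rfl⟩, by simpa using θ.hom.naturality φ'⟩
  · rintro _ ⟨l, rfl⟩ j' ψ
    obtain ⟨l', ψ', rfl, rfl⟩ := hg_lift l j' ψ
    exact ⟨_, _, f.map ψ', ⟨l', rfl⟩, by simpa using θ.hom.naturality ψ'⟩

inductive Moves (I J : Type*) [Quiver I] [Quiver J]
  | startFst (i : I)
  | startSnd (j : J)
  | forth (m : Moves I J) {i i' : I} (φ : i ⟶ i')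
  | back (m : Moves I J) {j j' : J} (ψ : j ⟶ j')

namespace IsBisimulation

variable {R : Set (IsoTriple F G)} (hR : IsBisimulation F G R)

noncomputable def forthStep (p : R) {i' : I} (φ : p.1.1 ⟶ i') : R :=
  have h := hR.forth p p.2 i' φ
  ⟨⟨i', h.choose, h.choose_spec.choose⟩, h.choose_spec.choose_spec.choose_spec.1⟩

noncomputable def backStep (p : R) {j' : J} (ψ : p.1.2.1 ⟶ j') : R :=
  have h := hR.back p p.2 j' ψ
  ⟨⟨h.choose, j', h.choose_spec.choose⟩, h.choose_spec.choose_spec.choose_spec.1⟩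

theorem exists_comp_forthStep (p : R) {i' : I} (φ : p.1.1 ⟶ i') :
    ∃ ψ, F.map φ ≫ (hR.forthStep p φ).1.2.2.hom = p.1.2.2.hom ≫ G.map ψ :=
  ⟨_, (hR.forth p p.2 i' φ).choose_spec.choose_spec.choose_spec.2⟩

theorem exists_comp_backStep (p : R) {j' : J} (ψ : p.1.2.1 ⟶ j') :
    ∃ φ, F.map φ ≫ (hR.backStep p ψ).1.2.2.hom = p.1.2.2.hom ≫ G.map ψ :=
  ⟨_, (hR.back p p.2 j' ψ).choose_spec.choose_spec.choose_spec.2⟩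

open Classical in
noncomputable def reach : Moves I J → R
  | .startFst i => ⟨_, (hR.exists_fst i).choose_spec.1⟩
  | .startSnd j => ⟨_, (hR.exists_snd j).choose_spec.1⟩
  | .forth m (i := i) φ =>
      if h : (reach m).1.1 = i then hR.forthStep (reach m) (h ▸ φ) else reach m
  | .back m (j := j) ψ =>
      if h : (reach m).1.2.1 = j then hR.backStep (reach m) (h ▸ ψ) else reach m

theorem isBisimulation_range_reach :
    IsBisimulation F G (Set.range fun m => (hR.reach m).1) where
  exists_fst i := ⟨_, ⟨.startFst i, rfl⟩, (hR.exists_fst i).choose_spec.2⟩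
  exists_snd j := ⟨_, ⟨.startSnd j, rfl⟩, (hR.exists_snd j).choose_spec.2⟩
  forth := by
    rintro _ ⟨m, rfl⟩ i' φ
    obtain ⟨ψ, w⟩ := hR.exists_comp_forthStep _ φ
    exact ⟨_, _, ψ, ⟨.forth m φ, by simp only [reach, dif_pos]; rfl⟩, w⟩
  back := by
    rintro _ ⟨m, rfl⟩ j' ψ
    obtain ⟨φ, w⟩ := hR.exists_comp_backStep _ ψ
    exact ⟨_, _, φ, ⟨.back m ψ, by simp only [reach, dif_pos]; rfl⟩, w⟩

end IsBisimulation

namespace IsoTriple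

abbrev toComma (p : IsoTriple F G) : Comma F G := ⟨p.1, p.2.1, p.2.2.hom⟩

variable {T : Type*} (e : T → IsoTriple F G)

abbrev Span := InducedCategory (Comma F G) (toComma ∘ e)

def spanFst : Span e ⥤ I := inducedFunctor _ ⋙ Comma.fst F G

def spanSnd : Span e ⥤ J := inducedFunctor _ ⋙ Comma.snd F G

def spanNatTrans : spanFst e ⋙ F ⟶ spanSnd e ⋙ G :=
  Functor.whiskerLeft (inducedFunctor _) (Comma.natTrans F G)

instance : IsIso (spanNatTrans e) :=
  have (t : Span e) : IsIso ((spanNatTrans e).app t) := (e t).2.2.isIso_hom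
  NatIso.isIso_of_isIso_app _

variable {e}

theorem exists_spanFst_map_eq {t t' : Span e} {q : IsoTriple F G} (ht' : e t' = q)
    (m : toComma (e t) ⟶ toComma q) :
    ∃ (φ : t ⟶ t') (h : (spanFst e).obj t' = q.1), (spanFst e).map φ ≫ eqToHom h = m.left := by
  subst ht'
  exact ⟨InducedCategory.homMk m, rfl, by simp [spanFst]⟩

theorem exists_spanSnd_map_eq {t t' : Span e} {q : IsoTriple F G} (ht' : e t' = q)
    (m : toComma (e t) ⟶ toComma q) :
    ∃ (ψ : t ⟶ t') (h : (spanSnd e).obj t' = q.2.1), (spanSnd e).map ψ ≫ eqToHom h = m.right := by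
  subst ht'
  exact ⟨InducedCategory.homMk m, rfl, by simp [spanSnd]⟩

theorem isOpenDiagMap_spanFst (he : IsBisimulation F G (Set.range e)) :
    IsOpenDiagMap (spanFst e ⋙ F) F (spanFst e) (𝟙 _) := by
  refine ⟨fun i => ?_, fun t i' φ => ?_, inferInstance⟩
  · obtain ⟨_, ⟨t, rfl⟩, rfl⟩ := he.exists_fst i
    exact ⟨t, rfl⟩
  · obtain ⟨j', η', ψ, ⟨t', ht'⟩, w⟩ := he.forth (e t) ⟨t, rfl⟩ i' φ
    exact ⟨t', exists_spanFst_map_eq ht' ⟨φ, ψ, w⟩⟩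

theorem isOpenDiagMap_spanSnd (he : IsBisimulation F G (Set.range e)) :
    IsOpenDiagMap (spanFst e ⋙ F) G (spanSnd e) (spanNatTrans e) := by
  refine ⟨fun j => ?_, fun t j' ψ => ?_, inferInstance⟩
  · obtain ⟨_, ⟨t, rfl⟩, rfl⟩ := he.exists_snd j
    exact ⟨t, rfl⟩
  · obtain ⟨i', η', φ, ⟨t', ht'⟩, w⟩ := he.back (e t) ⟨t, rfl⟩ j' ψ
    exact ⟨t', exists_spanSnd_map_eq ht' ⟨φ, ψ, w⟩⟩

end IsoTriple

end Bisimulation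

/-- Two small diagrams are bisimilar iff they are related by a span of open maps. -/
theorem bisimilar_iff_span_of_open {I J : Type w} [SmallCategory I] [SmallCategory J]
    (F : I ⥤ K) (G : J ⥤ K) :
    Bisimilar F G ↔
      ∃ (L : Cat.{w, w}) (H : L ⥤ K) (f : L ⥤ I) (μ : H ⟶ f ⋙ F)
        (g : L ⥤ J) (ν : H ⟶ g ⋙ G),
        IsOpenDiagMap H F f μ ∧ IsOpenDiagMap H G g ν := by
  refine ⟨fun h => ?_, fun ⟨_, _, _, _, _, _, hf, hg⟩ => .of_isOpenDiagMap hf hg⟩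
  obtain ⟨R, hR⟩ := (bisimilar_iff_exists_isBisimulation F G).1 h
  have he := hR.isBisimulation_range_reach
  exact ⟨Cat.of (IsoTriple.Span _), _, _, _, _, _,
    IsoTriple.isOpenDiagMap_spanFst he, IsoTriple.isOpenDiagMap_spanSnd he⟩
end

section
/- Let X be a cellular multipointed d-space. A continuous map [0,1] → |X| is a directed path of X (i.e. of Sp(X)) if and only if it is of the form γ∘φ where γ is either an execution path of X or a constant path and φ : [0,1] → [0,1] is a non-decreasing continuous map. -/
/- STATEMENT 14: Let X be a cellular multipointed d-space. A continuous map
[0,1] → |X| is a directed path of X (i.e. of Sp(X)) iff it is of the form γ∘φ with γ an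
execution path of X or a constant path, and φ a non-decreasing continuous self-map of
[0,1]. -/

open Set unitInterval

noncomputable section

variable {α : Type*} {β : Type*} [TopologicalSpace α] [TopologicalSpace β]

/-- A globular cell of a multipointed d-space `X`, of dimension `n + 1`: the data of an
attaching map `Glob^top(D^n) → X` (written as `g : D^n × [0,1] → α`, constant on
`D^n × {0}` and on `D^n × {1}`), injective on the open part, whose longitudinal paths
are execution paths of `X`. -/
structure GlobularCell (X : MultipointedDSpace α) where
  n : ℕ
  g : EuclideanSpace ℝ (Fin n) → I → α
  src : α
  tgt : α
  src_mem : src ∈ X.states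
  tgt_mem : tgt ∈ X.states
  g_src : ∀ z : EuclideanSpace ℝ (Fin n), ‖z‖ ≤ 1 → g z 0 = src
  g_tgt : ∀ z : EuclideanSpace ℝ (Fin n), ‖z‖ ≤ 1 → g z 1 = tgt
  g_cont : ContinuousOn (fun p : EuclideanSpace ℝ (Fin n) × I => g p.1 p.2)
    ((Metric.closedBall 0 1) ×ˢ univ)
  exec_mem : ∀ z : EuclideanSpace ℝ (Fin n), ‖z‖ ≤ 1 → (fun t => g z t) ∈ X.exec
  g_inj : ∀ (z z' : EuclideanSpace ℝ (Fin n)) (t t' : I), ‖z‖ < 1 → ‖z'‖ < 1 →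
    0 < (t : ℝ) → (t : ℝ) < 1 → 0 < (t' : ℝ) → (t' : ℝ) < 1 →
    g z t = g z' t' → z = z' ∧ t = t'

/-- The (open) globular cell: the image of `|Glob(D^n)| ∖ |Glob(S^{n-1})|`. -/
def GlobularCell.openCell {X : MultipointedDSpace α} (c : GlobularCell X) : Set α :=
  {x | ∃ (z : EuclideanSpace ℝ (Fin c.n)) (t : I),
    ‖z‖ < 1 ∧ 0 < (t : ℝ) ∧ (t : ℝ) < 1 ∧ c.g z t = x}

/-- A cellular multipointed d-space: a multipointed d-space obtained by (transfinitely)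
attaching globular cells to its set of states. The underlying space is Hausdorff, it is
partitioned into the states and the open globular cells, and every execution path
decomposes (uniquely) as its globular naturalization — a Moore composition of
longitudinal cell paths, each of length 1 — precomposed with a non-decreasing
continuous surjection [0,1] → [0,n+1]. -/
structure CellularMDSpace (α : Type*) [TopologicalSpace α]
    extends MultipointedDSpace α where
  t2 : T2Space α
  ι : Type*
  cell : ι → GlobularCell toMultipointedDSpace
  cell_disjoint : Pairwise fun i j => Disjoint (cell i).openCell (cell j).openCell
  cell_states_disjoint : ∀ i, Disjoint (cell i).openCell states
  cell_cover : states ∪ ⋃ i, (cell i).openCell = univ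
  exec_decomp : ∀ γ ∈ exec, ∃ (n : ℕ) (c : Fin (n + 1) → ι)
      (z : ∀ i : Fin (n + 1), EuclideanSpace ℝ (Fin (cell (c i)).n)) (φ : I → ℝ),
      (∀ i, ‖z i‖ < 1) ∧ Monotone φ ∧ Continuous φ ∧
      φ 0 = 0 ∧ φ 1 = (n + 1 : ℝ) ∧
      ∀ t : I, γ t = mooreCompN n (fun _ => 1)
        (fun i s => (cell (c i)).g (z i) (toI s)) (φ t)

/-!
By its globular naturalization, an execution path is a non-decreasing reparametrization of a chain
`P 0 * P 1 * ⋯ * P m` of longitudinal cell paths, consecutive ones meeting (by continuity) at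
states. Conversely such a chain, run at uniform speed, is an execution path. Reparametrized chains
are closed under concatenation: the point where two of them meet is either a state, where the
chains can simply be concatenated, or an interior point of a cell, which by injectivity of the
attaching maps lies on the same cell path at the same parameter in both chains, which therefore
overlap along that cell. A directed path is a Moore composite of reparametrized execution paths,
hence a reparametrized chain.
-/

theorem toI_coe_s14 (t : I) : toI t = t := projIcc_val zero_le_one t

theorem coe_toI {x : ℝ} (h0 : 0 ≤ x) (h1 : x ≤ 1) : (toI x : ℝ) = x := by
  rw [toI, projIcc_of_mem zero_le_one ⟨h0, h1⟩]

@[simp] theorem toI_zero : toI 0 = 0 := toI_coe_s14 0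

@[simp] theorem toI_one : toI 1 = 1 := toI_coe_s14 1

theorem toI_of_nonpos {x : ℝ} (hx : x ≤ 0) : toI x = 0 := projIcc_of_le_left zero_le_one hx

theorem monotone_toI : Monotone toI := monotone_projIcc zero_le_one

@[fun_prop] theorem continuous_toI : Continuous toI := continuous_projIcc (h := zero_le_one)

theorem isNondecreasing_toI_comp {r : I → ℝ} (hm : Monotone r) (hc : Continuous r) :
    IsNondecreasing fun t => toI (r t) :=
  ⟨monotone_toI.comp hm, continuous_toI.comp hc⟩

theorem isReparam_of_monotone {φ : I → I} (hm : Monotone φ) (hc : Continuous φ) (h0 : φ 0 = 0)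
    (h1 : φ 1 = 1) : IsReparam φ := by
  refine ⟨hm, fun y => ?_, hc⟩
  have := intermediate_value_univ 0 1 hc
  rw [h0, h1] at this
  exact this ⟨y.2.1, y.2.2⟩

theorem IsReparam.isNondecreasing {φ : I → I} (h : IsReparam φ) : IsNondecreasing φ := ⟨h.1, h.2.2⟩

theorem eq_of_eqOn_Ioo [T2Space α] {f g : I → α} (hf : Continuous f) (hg : Continuous g)
    {a b : I} (hab : a < b) (h : EqOn f g (Ioo a b)) : f a = g a := by
  have := h.closure hf hg
  rw [closure_Ioo hab.ne] at this
  exact this (left_mem_Icc.2 hab.le)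

theorem eq_of_eqOn_pos [T2Space α] {f g : I → α} (hf : Continuous f) (hg : Continuous g)
    (h : ∀ t : I, 0 < t → f t = g t) : f = g := by
  funext t
  rcases t.2.1.eq_or_lt with ht | ht
  · obtain rfl : t = 0 := Subtype.ext ht.symm
    exact eq_of_eqOn_Ioo hf hg zero_lt_one fun s hs => h s hs.1
  · exact h t (coe_pos.1 ht)

theorem normComp_of_le {E : Type*} {f g : I → E} {t : I} (ht : (t : ℝ) ≤ 1 / 2) :
    normComp f g t = f (toI (2 * t)) := if_pos ht

theorem normComp_of_lt {E : Type*} {f g : I → E} {t : I} (ht : 1 / 2 < (t : ℝ)) :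
    normComp f g t = g (toI (2 * t - 1)) := if_neg ht.not_ge

@[simp] theorem normComp_zero {E : Type*} (f g : I → E) : normComp f g 0 = f 0 := by
  rw [normComp_of_le (by norm_num)]; simp

@[simp] theorem normComp_one {E : Type*} (f g : I → E) : normComp f g 1 = g 1 := by
  rw [normComp_of_lt (by norm_num)]; norm_num

theorem comp_normComp {E F : Type*} (h : E → F) (f g : I → E) :
    h ∘ normComp f g = normComp (h ∘ f) (h ∘ g) := by
  funext t
  simp only [Function.comp_apply, normComp]
  split_ifs <;> rfl

theorem Monotone.normComp {f g : I → ℝ} (hf : Monotone f) (hg : Monotone g) (h : f 1 ≤ g 0) :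
    Monotone (normComp f g) := by
  intro s t hst
  have hst' : (s : ℝ) ≤ t := hst
  unfold _root_.normComp
  split_ifs with hs ht ht
  · exact hf (monotone_toI (by linarith))
  · exact (hf le_one').trans (h.trans (hg nonneg'))
  · linarith
  · exact hg (monotone_toI (by linarith))

theorem Continuous.normComp {f g : I → α} (hf : Continuous f) (hg : Continuous g) (h : f 1 = g 0) :
    Continuous (normComp f g) := by
  refine Continuous.if_le (hf.comp (by fun_prop)) (hg.comp (by fun_prop)) (by fun_prop)
    continuous_const fun t ht => ?_
  simp only [ht]
  norm_num [h]

/-- The piecewise linear map sending `[0, c]` onto `[0, 1/2]` and `[c, 1]` onto `[1/2, 1]`. -/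
def splitAt (c : ℝ) (t : I) : I :=
  toI (min (t / (2 * c)) (1 / 2) + max 0 ((t - c) / (2 * (1 - c))))

theorem isReparam_splitAt {c : ℝ} (hc0 : 0 < c) (hc1 : c < 1) : IsReparam (splitAt c) := by
  have h1c : 0 < 1 - c := by linarith
  have hm : Monotone fun t : I => min ((t : ℝ) / (2 * c)) (1 / 2) +
      max 0 (((t : ℝ) - c) / (2 * (1 - c))) := by
    refine Monotone.add (Monotone.min ?_ monotone_const) (Monotone.max monotone_const ?_) <;>
      intro s t (hst : (s : ℝ) ≤ t)
    · exact div_le_div_of_nonneg_right hst (by positivity)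
    · exact div_le_div_of_nonneg_right (by linarith) (by positivity)
  refine isReparam_of_monotone (monotone_toI.comp hm) (continuous_toI.comp (by fun_prop)) ?_ ?_
  · simp only [splitAt, Icc.coe_zero, zero_div, zero_sub]
    rw [min_eq_left (by norm_num), max_eq_left (div_nonpos_of_nonpos_of_nonneg (by linarith)
      (by linarith)), add_zero, toI_zero]
  · simp only [splitAt, Icc.coe_one]
    rw [min_eq_right (by rw [le_div_iff₀ (by linarith)]; linarith),
      max_eq_right (by positivity), div_mul_cancel_right₀ h1c.ne']
    norm_num

theorem normComp_splitAt {c : ℝ} (hc0 : 0 < c) (hc1 : c < 1) {E : Type*} (f g : I → E) (t : I) :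
    normComp f g (splitAt c t) =
      if (t : ℝ) ≤ c then f (toI (t / c)) else g (toI ((t - c) / (1 - c))) := by
  have h1c : 0 < 1 - c := by linarith
  have ht0 : (0 : ℝ) ≤ t := t.2.1
  have ht1 : (t : ℝ) ≤ 1 := t.2.2
  split_ifs with htc
  · have hv : (splitAt c t : ℝ) = t / (2 * c) := by
      rw [splitAt, min_eq_left (by rw [div_le_iff₀ (by linarith)]; linarith),
        max_eq_left (div_nonpos_of_nonpos_of_nonneg (by linarith) (by linarith)), add_zero,
        coe_toI (by positivity) (by rw [div_le_iff₀ (by linarith)]; linarith)]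
    rw [normComp_of_le (by rw [hv, div_le_iff₀ (by linarith)]; linarith), hv]
    congr 2
    field_simp
  · rw [not_le] at htc
    have hd : (t - c) / (2 * (1 - c)) ≤ 1 / 2 := by rw [div_le_iff₀ (by linarith)]; linarith
    have hd0 : 0 < (t - c) / (2 * (1 - c)) := div_pos (by linarith) (by linarith)
    have hv : (splitAt c t : ℝ) = 1 / 2 + (t - c) / (2 * (1 - c)) := by
      rw [splitAt, min_eq_right (by rw [le_div_iff₀ (by linarith)]; linarith),
        max_eq_right hd0.le, coe_toI (by linarith) (by linarith)]
    rw [normComp_of_lt (by rw [hv]; linarith), hv]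
    congr 2
    field_simp
    ring

/-- The Moore composition `P 0 * P 1 * ⋯` of unit-length paths, which runs `P k` on `(k, k + 1]`
(as `mooreCompN` does) and `P 0` at the start. -/
def mooreChain {E : Type*} (P : ℕ → I → E) (s : ℝ) : E :=
  P (⌈s⌉₊ - 1) (toI (s - (⌈s⌉₊ - 1 : ℕ)))

theorem exists_nat_lt_le_add_one {u : ℝ} (hu : 0 < u) : ∃ k : ℕ, (k : ℝ) < u ∧ u ≤ k + 1 := by
  have hc : 1 ≤ ⌈u⌉₊ := Nat.one_le_iff_ne_zero.2 (Nat.ceil_pos.2 hu).ne'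
  refine ⟨⌈u⌉₊ - 1, ?_, ?_⟩ <;> push_cast [hc]
  · linarith [Nat.ceil_lt_add_one hu.le]
  · linarith [Nat.le_ceil u]

section mooreChain

variable {E : Type*} {P Q : ℕ → I → E} {s u : ℝ}

theorem mooreChain_of_mem_Ioc {k : ℕ} (h1 : (k : ℝ) < s) (h2 : s ≤ k + 1) :
    mooreChain P s = P k (toI (s - k)) := by
  have hc : ⌈s⌉₊ = k + 1 :=
    (Nat.ceil_eq_iff k.succ_ne_zero).2 ⟨by simpa using h1, by simpa using h2⟩
  simp [mooreChain, hc]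

theorem mooreChain_of_nonpos (hs : s ≤ 0) : mooreChain P s = P 0 0 := by
  simp [mooreChain, Nat.ceil_eq_zero.2 hs, toI_of_nonpos hs]

theorem mooreChain_zero : mooreChain P 0 = P 0 0 := mooreChain_of_nonpos le_rfl

theorem mooreChain_of_le_one (hs : s ≤ 1) : mooreChain P s = P 0 (toI s) := by
  rcases le_or_gt s 0 with h0 | h0
  · rw [mooreChain_of_nonpos h0, toI_of_nonpos h0]
  · simpa using mooreChain_of_mem_Ioc (P := P) (k := 0) (by simpa using h0) (by simpa using hs)

theorem mooreChain_natCast_add_one (k : ℕ) : mooreChain P (k + 1) = P k 1 := by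
  rw [mooreChain_of_mem_Ioc (by linarith) le_rfl, add_sub_cancel_left, toI_one]

theorem mooreChain_natCast {m k : ℕ} (hadj : ∀ j < m, P j 1 = P (j + 1) 0) (hk : k ≤ m) :
    mooreChain P k = P k 0 := by
  cases k with
  | zero => simpa using mooreChain_zero
  | succ j => rw [Nat.cast_succ, mooreChain_natCast_add_one, hadj j hk]

theorem mooreChain_natCast_add (k : ℕ) (hu : 0 < u) :
    mooreChain P (k + u) = mooreChain (fun j => P (j + k)) u := by
  obtain ⟨j, h1, h2⟩ := exists_nat_lt_le_add_one hu
  rw [mooreChain_of_mem_Ioc h1 h2, mooreChain_of_mem_Ioc (k := j + k) (by push_cast; linarith)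
    (by push_cast; linarith)]
  congr 2
  push_cast
  ring

theorem mooreChain_congr_of_lt {p : ℕ} (h : ∀ j < p, Q j = P j) (hs0 : 0 ≤ s) (hs : s < p) :
    mooreChain Q s = mooreChain P s := by
  have hp : ⌈s⌉₊ ≤ p := Nat.ceil_le.2 hs.le
  have hp0 : 0 < p := by exact_mod_cast hs0.trans_lt hs
  rw [mooreChain, mooreChain, h _ (by omega)]

theorem mooreCompN_eq_mooreChain (n : ℕ) (P : ℕ → I → E) {s : ℝ} (hs : s ≤ n + 1) :
    mooreCompN n (fun _ => 1) (fun i s => P i (toI s)) s = mooreChain P s := by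
  induction n generalizing P s with
  | zero => exact (mooreChain_of_le_one (by simpa using hs)).symm
  | succ n ih =>
    change mooreComp 1 _ _ s = _
    unfold mooreComp
    split_ifs with h1
    · exact (mooreChain_of_le_one h1).symm
    · have := ih (fun j => P (j + 1)) (s := s - 1) (by push_cast at hs; linarith)
      rw [← mooreChain_natCast_add 1 (by linarith), Nat.cast_one, add_sub_cancel] at this
      exact this

end mooreChain

theorem MultipointedDSpace.mooreChain_mul_mem_exec (X : MultipointedDSpace α) {m : ℕ}
    {P : ℕ → I → α} (hP : ∀ j ≤ m, P j ∈ X.exec) (hadj : ∀ j < m, P j 1 = P (j + 1) 0) :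
    (fun t : I => mooreChain P ((m + 1) * t)) ∈ X.exec := by
  induction m generalizing P with
  | zero =>
    convert hP 0 le_rfl using 1
    funext t
    rw [Nat.cast_zero, zero_add, one_mul, mooreChain_of_le_one t.2.2, toI_coe_s14]
  | succ m ih =>
    have hB := ih (P := fun j => P (j + 1)) (fun j hj => hP _ (by omega))
      fun j hj => hadj _ (by omega)
    have hjun : P 0 1 = mooreChain (fun j => P (j + 1)) ((m + 1) * ((0 : I) : ℝ)) := by
      rw [Icc.coe_zero, mul_zero, mooreChain_zero, hadj 0 (by omega)]
    have hc0 : (0 : ℝ) < 1 / (m + 2) := by positivity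
    have hc1 : 1 / ((m : ℝ) + 2) < 1 := by rw [div_lt_one (by positivity)]; linarith
    convert X.exec_reparam _ (X.exec_norm _ (hP 0 (by omega)) _ hB hjun) _
      (isReparam_splitAt hc0 hc1) using 1
    funext t
    rw [Function.comp_apply, normComp_splitAt hc0 hc1]
    push_cast
    split_ifs with ht
    · rw [le_div_iff₀ (by positivity), mul_comm] at ht
      rw [mooreChain_of_le_one (by linarith)]
      congr 2
      field_simp
      ring
    · rw [not_le, div_lt_iff₀ (by positivity)] at ht
      have hv : ((m : ℝ) + 1) * ((t - 1 / (m + 2)) / (1 - 1 / (m + 2))) = (m + 1 + 1) * t - 1 := by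
        rw [show (1 : ℝ) - 1 / (m + 2) = (m + 1) / (m + 2) by field_simp; ring]
        field_simp
        ring
      have hu0 : (0 : ℝ) ≤ (t - 1 / (m + 2)) / (1 - 1 / (m + 2)) :=
        div_nonneg (by rw [sub_nonneg, div_le_iff₀ (by positivity)]; linarith) (by linarith)
      have hu1 : ((t : ℝ) - 1 / (m + 2)) / (1 - 1 / (m + 2)) ≤ 1 := by
        rw [div_le_one (by linarith)]; linarith [t.2.2]
      rw [coe_toI hu0 hu1, hv, ← mooreChain_natCast_add 1 (by linarith), Nat.cast_one,
        add_sub_cancel]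

theorem mooreChain_adj_of_continuous [T2Space α] {P : ℕ → I → α} (hP : ∀ j, Continuous (P j))
    {m : ℕ} {ψ : I → ℝ} (hm : Monotone ψ) (hc : Continuous ψ) (h0 : ψ 0 = 0) (h1 : ψ 1 = m + 1)
    (hγ : Continuous (mooreChain P ∘ ψ)) {j : ℕ} (hj : j < m) : P j 1 = P (j + 1) 0 := by
  have hjm : (j : ℝ) + 1 + 1 ≤ m + 1 := by exact_mod_cast Nat.succ_le_succ hj
  have hivt : ∀ y : ℝ, 0 ≤ y → y ≤ m + 1 → ∃ t, ψ t = y := fun y hy0 hy1 =>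
    intermediate_value_univ 0 1 hc (by rw [h0, h1]; exact ⟨hy0, hy1⟩)
  -- `b` is the last time at which `ψ` equals `j + 1`, and `ψ c = j + 2`
  obtain ⟨b, hb, hbmax⟩ := (isClosed_singleton.preimage hc).isCompact.exists_isGreatest
    (hivt (j + 1) (by positivity) (by linarith))
  obtain ⟨c, hc'⟩ := hivt (j + 1 + 1) (by positivity) hjm
  rw [mem_preimage, mem_singleton_iff] at hb
  have hbc : b < c := lt_of_not_ge fun hcb => by linarith [hm hcb]
  have heq : EqOn (mooreChain P ∘ ψ) (fun t => P (j + 1) (toI (ψ t - (j + 1 : ℕ)))) (Ioo b c) := by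
    rintro t ⟨hbt, htc⟩
    have hk : ((j + 1 : ℕ) : ℝ) < ψ t := by
      push_cast
      exact (hb ▸ hm hbt.le).lt_of_ne fun h => hbt.not_ge (hbmax h.symm)
    exact mooreChain_of_mem_Ioc hk (by push_cast; linarith [hm htc.le])
  have := eq_of_eqOn_Ioo hγ ((hP _).comp (continuous_toI.comp (hc.sub continuous_const))) hbc heq
  simpa [hb, mooreChain_natCast_add_one] using this

def glueChain {E : Type*} (p q : ℕ) (P P' : ℕ → I → E) (j : ℕ) : I → E :=
  if j < p then P j else P' (j - p + q)

section glueChain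

variable {E : Type*} {p q : ℕ} {P P' : ℕ → I → E}

theorem glueChain_of_lt {j : ℕ} (h : j < p) : glueChain p q P P' j = P j := if_pos h

theorem glueChain_add (j : ℕ) : glueChain p q P P' (j + p) = P' (j + q) := by
  simp [glueChain]

theorem glueChain_self : glueChain p q P P' p = P' q := by
  simpa using glueChain_add (p := p) (q := q) (P := P) (P' := P') 0

theorem mooreChain_glueChain_of_lt {s : ℝ} (hs0 : 0 ≤ s) (hs : s < p) :
    mooreChain (glueChain p q P P') s = mooreChain P s :=
  mooreChain_congr_of_lt (fun _ => glueChain_of_lt) hs0 hs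

theorem mooreChain_glueChain_natCast_add {m' : ℕ} (hadj : ∀ j < m', P' j 1 = P' (j + 1) 0)
    (hq : q ≤ m') (hseam : mooreChain P p = mooreChain P' q) {u : ℝ} (hu : 0 ≤ u) :
    mooreChain (glueChain p q P P') (p + u) = mooreChain P' (q + u) := by
  rcases hu.eq_or_lt with rfl | hu
  · rw [add_zero, add_zero]
    cases p with
    | zero =>
      rw [Nat.cast_zero, mooreChain_zero, mooreChain_natCast hadj hq]
      simp [glueChain]
    | succ j =>
      rw [← hseam, Nat.cast_succ, mooreChain_natCast_add_one, mooreChain_natCast_add_one,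
        glueChain_of_lt j.lt_succ_self]
  · simp only [mooreChain_natCast_add _ hu, glueChain_add]

end glueChain

namespace CellularMDSpace

variable (X : CellularMDSpace α)

def IsCellPath (p : I → α) : Prop :=
  ∃ (i : X.ι) (z : EuclideanSpace ℝ (Fin (X.cell i).n)), ‖z‖ < 1 ∧ p = (X.cell i).g z

structure IsCellChain (m : ℕ) (P : ℕ → I → α) : Prop where
  isCellPath : ∀ j, X.IsCellPath (P j)
  adj : ∀ j < m, P j 1 = P (j + 1) 0

def IsChainPath (γ : I → α) : Prop :=
  ∃ (m : ℕ) (P : ℕ → I → α) (Φ : I → ℝ), X.IsCellChain m P ∧ Monotone Φ ∧ Continuous Φ ∧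
    0 ≤ Φ 0 ∧ Φ 1 ≤ m + 1 ∧ γ = mooreChain P ∘ Φ

variable {X}

namespace IsCellPath

variable {p q : I → α}

theorem mem_exec (hp : X.IsCellPath p) : p ∈ X.exec := by
  obtain ⟨i, z, hz, rfl⟩ := hp
  exact (X.cell i).exec_mem z hz.le

theorem continuous (hp : X.IsCellPath p) : Continuous p := X.exec_cont p hp.mem_exec

theorem apply_zero_mem_states (hp : X.IsCellPath p) : p 0 ∈ X.states := by
  obtain ⟨i, z, hz, rfl⟩ := hp
  rw [(X.cell i).g_src z hz.le]
  exact (X.cell i).src_mem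

theorem apply_one_mem_states (hp : X.IsCellPath p) : p 1 ∈ X.states := by
  obtain ⟨i, z, hz, rfl⟩ := hp
  rw [(X.cell i).g_tgt z hz.le]
  exact (X.cell i).tgt_mem

theorem apply_notMem_states (hp : X.IsCellPath p) {t : I} (ht0 : 0 < (t : ℝ)) (ht1 : (t : ℝ) < 1) :
    p t ∉ X.states := by
  obtain ⟨i, z, hz, rfl⟩ := hp
  exact disjoint_left.1 (X.cell_states_disjoint i) ⟨z, t, hz, ht0, ht1, rfl⟩

theorem eq_of_apply_eq (hp : X.IsCellPath p) (hq : X.IsCellPath q) {t t' : I}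
    (ht0 : 0 < (t : ℝ)) (ht1 : (t : ℝ) < 1) (ht0' : 0 < (t' : ℝ)) (ht1' : (t' : ℝ) < 1)
    (h : p t = q t') : p = q ∧ t = t' := by
  obtain ⟨i, z, hz, rfl⟩ := hp
  obtain ⟨j, z', hz', rfl⟩ := hq
  obtain rfl : i = j := by
    by_contra hij
    exact disjoint_left.1 (X.cell_disjoint hij) ⟨z, t, hz, ht0, ht1, rfl⟩
      ⟨z', t', hz', ht0', ht1', h.symm⟩
  obtain ⟨rfl, rfl⟩ := (X.cell i).g_inj z z' t t' hz hz' ht0 ht1 ht0' ht1' h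
  exact ⟨rfl, rfl⟩

end IsCellPath

theorem mooreChain_natCast_mem_states {P : ℕ → I → α} (hP : ∀ j, X.IsCellPath (P j)) (k : ℕ) :
    mooreChain P k ∈ X.states := by
  cases k with
  | zero => simpa [mooreChain_zero] using (hP 0).apply_zero_mem_states
  | succ j => simpa [mooreChain_natCast_add_one] using (hP j).apply_one_mem_states

theorem mooreChain_mem_states_iff {P : ℕ → I → α} (hP : ∀ j, X.IsCellPath (P j)) {s : ℝ}
    (hs : 0 ≤ s) : mooreChain P s ∈ X.states ↔ s = ⌊s⌋₊ := by
  rcases (Nat.floor_le hs).eq_or_lt with h | h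
  · rw [← h]
    simpa using mooreChain_natCast_mem_states hP _
  · rw [mooreChain_of_mem_Ioc h (Nat.lt_floor_add_one s).le]
    refine iff_of_false ((hP _).apply_notMem_states ?_ ?_) h.ne' <;>
      rw [coe_toI (by linarith) (by linarith [Nat.lt_floor_add_one s])] <;>
      linarith [Nat.lt_floor_add_one s]

namespace IsCellChain

variable {m m' : ℕ} {P P' : ℕ → I → α}

/-- The point where two cell chains meet is either a state, or lies on a common cell path at the
same parameter in both, so that the chains agree until the end of that cell. -/
theorem junction (hP : X.IsCellChain m P) (hP' : X.IsCellChain m' P') {a b : ℝ} (hb0 : 0 ≤ b)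
    (hb : b ≤ m + 1) (ha0 : 0 ≤ a) (ha : a ≤ m' + 1) (h : mooreChain P b = mooreChain P' a) :
    b - ⌊b⌋₊ = a - ⌊a⌋₊ ∧ ∀ u, 0 ≤ u → u ≤ b - ⌊b⌋₊ →
      mooreChain P (⌊b⌋₊ + u) = mooreChain P' (⌊a⌋₊ + u) := by
  have hstates : b = ⌊b⌋₊ ↔ a = ⌊a⌋₊ := by
    rw [← mooreChain_mem_states_iff hP.isCellPath hb0,
      ← mooreChain_mem_states_iff hP'.isCellPath ha0, h]
  by_cases hb' : b = ⌊b⌋₊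
  · have ha' := hstates.1 hb'
    refine ⟨by linarith, fun u hu0 hu1 => ?_⟩
    obtain rfl : u = 0 := by linarith
    rwa [add_zero, add_zero, ← hb', ← ha']
  have ha' : a ≠ ⌊a⌋₊ := mt hstates.2 hb'
  have hbI := (Nat.floor_le hb0).lt_of_ne' hb'
  have haI := (Nat.floor_le ha0).lt_of_ne' ha'
  have hb1 := Nat.lt_floor_add_one b
  have ha1 := Nat.lt_floor_add_one a
  rw [mooreChain_of_mem_Ioc hbI hb1.le, mooreChain_of_mem_Ioc haI ha1.le] at h
  obtain ⟨hPP', hfr⟩ := (hP.isCellPath _).eq_of_apply_eq (hP'.isCellPath _)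
    (by rw [coe_toI] <;> linarith) (by rw [coe_toI] <;> linarith)
    (by rw [coe_toI] <;> linarith) (by rw [coe_toI] <;> linarith) h
  have hfr' := congrArg Subtype.val hfr
  rw [coe_toI (by linarith) (by linarith), coe_toI (by linarith) (by linarith)] at hfr'
  refine ⟨hfr', fun u hu0 hu1 => ?_⟩
  rcases hu0.eq_or_lt with rfl | hu0
  · have hbm : ⌊b⌋₊ ≤ m := by exact_mod_cast Nat.lt_succ_iff.1 (by exact_mod_cast hbI.trans_le hb)
    have ham : ⌊a⌋₊ ≤ m' := by exact_mod_cast Nat.lt_succ_iff.1 (by exact_mod_cast haI.trans_le ha)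
    rw [add_zero, add_zero, mooreChain_natCast hP.adj hbm, mooreChain_natCast hP'.adj ham, hPP']
  · rw [mooreChain_of_mem_Ioc (k := ⌊b⌋₊) (by linarith) (by linarith),
      mooreChain_of_mem_Ioc (k := ⌊a⌋₊) (by linarith) (by linarith), add_sub_cancel_left,
      add_sub_cancel_left, hPP']

theorem glue (hP : X.IsCellChain m P) (hP' : X.IsCellChain m' P') {p q : ℕ}
    (hp : p ≤ m + 1) (hq : q ≤ m') (hseam : mooreChain P p = mooreChain P' q) :
    X.IsCellChain (p + m' - q) (glueChain p q P P') := by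
  refine ⟨fun j => ?_, fun j hj => ?_⟩
  · unfold _root_.glueChain
    split_ifs
    exacts [hP.isCellPath j, hP'.isCellPath _]
  rcases lt_trichotomy (j + 1) p with hjp | hjp | hjp
  · rw [glueChain_of_lt hjp, glueChain_of_lt (by omega), hP.adj j (by omega)]
  · subst hjp
    rw [glueChain_of_lt j.lt_succ_self, ← mooreChain_natCast_add_one (P := P), ← Nat.cast_succ,
      hseam, mooreChain_natCast hP'.adj hq, glueChain_self]
  · obtain ⟨i, rfl⟩ : ∃ i, j = i + p := ⟨j - p, by omega⟩
    rw [glueChain_add, add_right_comm, glueChain_add, hP'.adj _ (by omega), add_right_comm]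

theorem exists_glue (hP : X.IsCellChain m P) (hP' : X.IsCellChain m' P') {a b : ℝ}
    (hb0 : 0 ≤ b) (hb : b ≤ m + 1) (ha0 : 0 ≤ a) (ha : a < m' + 1)
    (h : mooreChain P b = mooreChain P' a) :
    ∃ (N : ℕ) (Q : ℕ → I → α), X.IsCellChain N Q ∧ (m' : ℝ) + 1 + (b - a) ≤ N + 1 ∧
      (∀ s, 0 ≤ s → s ≤ b → mooreChain Q s = mooreChain P s) ∧
      ∀ s, a ≤ s → mooreChain Q (s + (b - a)) = mooreChain P' s := by
  obtain ⟨hfr, hseg⟩ := hP.junction hP' hb0 hb ha0 ha.le h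
  set p := ⌊b⌋₊
  set q := ⌊a⌋₊
  have hpb : (p : ℝ) ≤ b := Nat.floor_le hb0
  have hqa : (q : ℝ) ≤ a := Nat.floor_le ha0
  have hp : p ≤ m + 1 := Nat.floor_le_of_le (by exact_mod_cast hb)
  have hq : q ≤ m' := Nat.lt_succ_iff.1 (by exact_mod_cast hqa.trans_lt ha)
  have hseam : mooreChain P p = mooreChain P' q := by simpa using hseg 0 le_rfl (by linarith)
  have hglue : ∀ u : ℝ, 0 ≤ u → mooreChain (glueChain p q P P') (p + u) = mooreChain P' (q + u) :=
    fun _ => mooreChain_glueChain_natCast_add hP'.adj hq hseam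
  refine ⟨p + m' - q, glueChain p q P P', hP.glue hP' hp hq hseam, ?_,
    fun s hs0 hsb => ?_, fun s has => ?_⟩
  · rw [Nat.cast_sub (by omega)]
    push_cast
    linarith
  · rcases lt_or_ge s p with hsp | hps
    · exact mooreChain_glueChain_of_lt hs0 hsp
    · rw [← add_sub_cancel (p : ℝ) s, hglue (s - p) (by linarith),
        hseg (s - p) (by linarith) (by linarith)]
  · rw [show s + (b - a) = p + (s - q) by linarith, hglue (s - q) (by linarith), add_sub_cancel]

end IsCellChain

theorem isChainPath_normComp_mooreChain {m : ℕ} {Q : ℕ → I → α} (hQ : X.IsCellChain m Q)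
    {Φ₁ Φ₂ : I → ℝ} (hm₁ : Monotone Φ₁) (hm₂ : Monotone Φ₂) (hc₁ : Continuous Φ₁)
    (hc₂ : Continuous Φ₂) (h0 : 0 ≤ Φ₁ 0) (h1 : Φ₂ 1 ≤ m + 1) (h : Φ₁ 1 = Φ₂ 0) :
    X.IsChainPath (normComp (mooreChain Q ∘ Φ₁) (mooreChain Q ∘ Φ₂)) :=
  ⟨m, Q, normComp Φ₁ Φ₂, hQ, hm₁.normComp hm₂ h.le, hc₁.normComp hc₂ h, by rwa [normComp_zero],
    by rwa [normComp_one], (comp_normComp _ _ _).symm⟩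

namespace IsChainPath

variable {γ γ₁ γ₂ : I → α}

theorem comp (h : X.IsChainPath γ) {φ : I → I} (hφ : IsNondecreasing φ) :
    X.IsChainPath (γ ∘ φ) := by
  obtain ⟨m, P, Φ, hP, hm, hc, h0, h1, rfl⟩ := h
  exact ⟨m, P, Φ ∘ φ, hP, hm.comp hφ.1, hc.comp hφ.2, h0.trans (hm nonneg'),
    (hm le_one').trans h1, rfl⟩

theorem exists_exec (h : X.IsChainPath γ) :
    ∃ (ε : I → α) (θ : I → I), ε ∈ X.exec ∧ IsNondecreasing θ ∧ γ = ε ∘ θ := by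
  obtain ⟨m, P, Φ, hP, hm, hc, h0, h1, rfl⟩ := h
  have hm0 : (0 : ℝ) < m + 1 := by positivity
  refine ⟨_, _, X.mooreChain_mul_mem_exec (fun j _ => (hP.isCellPath j).mem_exec) hP.adj,
    isNondecreasing_toI_comp (fun s t hst => div_le_div_of_nonneg_right (hm hst) hm0.le)
      (hc.div_const _), funext fun t => ?_⟩
  rw [Function.comp_apply, Function.comp_apply, coe_toI (div_nonneg (h0.trans (hm nonneg')) hm0.le)
    ((div_le_one hm0).2 ((hm le_one').trans h1)), mul_div_cancel₀ _ hm0.ne']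

theorem continuous (h : X.IsChainPath γ) : Continuous γ := by
  obtain ⟨ε, θ, hε, hθ, rfl⟩ := h.exists_exec
  exact (X.exec_cont ε hε).comp hθ.2

theorem normComp (h₁ : X.IsChainPath γ₁) (h₂ : X.IsChainPath γ₂) (h : γ₁ 1 = γ₂ 0) :
    X.IsChainPath (normComp γ₁ γ₂) := by
  obtain ⟨m, P, Φ₁, hP, hm₁, hc₁, h0₁, h1₁, rfl⟩ := h₁
  obtain ⟨m', P', Φ₂, hP', hm₂, hc₂, h0₂, h1₂, rfl⟩ := h₂
  have hb : Φ₁ 1 ≤ m + 1 := (hm₁ le_one').trans h1₁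
  rcases ((hm₂ nonneg').trans h1₂).lt_or_eq with ha | ha
  · obtain ⟨N, Q, hQ, hN, hQP, hQP'⟩ :=
      hP.exists_glue hP' (h0₁.trans (hm₁ nonneg')) hb h0₂ ha h
    have e₁ : mooreChain P ∘ Φ₁ = mooreChain Q ∘ Φ₁ :=
      funext fun t => (hQP _ (h0₁.trans (hm₁ nonneg')) (hm₁ le_one')).symm
    have e₂ : mooreChain P' ∘ Φ₂ = mooreChain Q ∘ fun t => Φ₂ t + (Φ₁ 1 - Φ₂ 0) :=
      funext fun t => (hQP' _ (hm₂ nonneg')).symm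
    rw [e₁, e₂]
    exact isChainPath_normComp_mooreChain hQ hm₁ (hm₂.add_const _) hc₁ (hc₂.add continuous_const)
      h0₁ (by linarith) (by ring)
  · have e₂ : mooreChain P' ∘ Φ₂ = mooreChain P ∘ fun _ => Φ₁ 1 := funext fun t => by
      have : Φ₂ t = Φ₂ 0 := le_antisymm (ha ▸ (hm₂ le_one').trans h1₂) (hm₂ nonneg')
      simp only [Function.comp_apply, this]
      exact h.symm
    rw [e₂]
    exact isChainPath_normComp_mooreChain hP hm₁ monotone_const hc₁ continuous_const h0₁ hb rfl

end IsChainPath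

theorem isChainPath_of_mem_exec {γ : I → α} (hγ : γ ∈ X.exec) : X.IsChainPath γ := by
  have := X.t2
  obtain ⟨m, c, z, ψ, hz, hm, hc, h0, h1, hdec⟩ := X.exec_decomp γ hγ
  set P : ℕ → I → α := fun j => (X.cell (c (Fin.clamp j m))).g (z (Fin.clamp j m))
  have hP : ∀ j, X.IsCellPath (P j) := fun j => ⟨_, _, hz _, rfl⟩
  have hγP : γ = mooreChain P ∘ ψ := by
    funext t
    rw [hdec t, Function.comp_apply, ← mooreCompN_eq_mooreChain m P (h1 ▸ hm le_one')]
    congr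
    funext i s
    have : Fin.clamp (i : ℕ) m = i := Fin.ext (min_eq_left (Nat.lt_succ_iff.1 i.2))
    simp only [P]
    rw [this]
  have hadj : ∀ j < m, P j 1 = P (j + 1) 0 := fun j hj =>
    mooreChain_adj_of_continuous (fun j => (hP j).continuous) hm hc h0 h1
      (hγP ▸ X.exec_cont γ hγ) hj
  exact ⟨m, P, ψ, ⟨hP, hadj⟩, hm, hc, h0.ge, h1.le, hγP⟩

theorem isChainPath_of_mooreComp {ℓ₀ L : ℝ} (hℓ₀ : 0 < ℓ₀) (hL : ℓ₀ < L) {f : I → α}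
    (hf : X.IsChainPath f) {G : ℝ → α}
    (hG : ∀ Γ' : I → α, Continuous Γ' → (∀ u : I, 0 < u → Γ' u = G ((L - ℓ₀) * u)) →
      X.IsChainPath Γ')
    {Γ : I → α} (hΓ : Continuous Γ)
    (hΓeq : ∀ t : I, 0 < t → Γ t = mooreComp ℓ₀ (fun s => f (toI (s / ℓ₀))) G (L * t)) :
    X.IsChainPath Γ := by
  have := X.t2
  have hL0 : 0 < L := hℓ₀.trans hL
  set c := ℓ₀ / L
  have hc0 : 0 < c := div_pos hℓ₀ hL0
  have hc1 : c < 1 := (div_lt_one hL0).2 hL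
  have hLc : L * c = ℓ₀ := mul_div_cancel₀ _ hL0.ne'
  have hcu : ∀ u : I, (toI (c + (1 - c) * u) : ℝ) = c + (1 - c) * u := fun u =>
    coe_toI (by nlinarith [u.2.1]) (by nlinarith [u.2.2])
  set Γ' : I → α := fun u => Γ (toI (c + (1 - c) * u))
  have hΓ' : X.IsChainPath Γ' := hG Γ' (hΓ.comp (by fun_prop)) fun u hu => by
    have hu' : (0 : ℝ) < u := coe_pos.2 hu
    have hLu : ℓ₀ < L * (c + (1 - c) * u) := by
      rw [mul_add, hLc]
      nlinarith
    change Γ _ = _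
    rw [hΓeq _ (coe_pos.1 (by rw [hcu]; nlinarith)), hcu, mooreComp, if_neg hLu.not_ge]
    congr 1
    rw [mul_add, hLc, ← mul_assoc, mul_sub, hLc, mul_one]
    ring
  have hc : (toI c : ℝ) = c := coe_toI hc0.le hc1.le
  have hjun : f 1 = Γ' 0 := by
    simp only [Γ', Icc.coe_zero, mul_zero, add_zero]
    rw [hΓeq _ (coe_pos.1 (by rw [hc]; exact hc0)), hc, mooreComp, if_pos hLc.le, hLc,
      div_self hℓ₀.ne', toI_one]
  have hsplit := (hf.normComp hΓ' hjun).comp (isReparam_splitAt hc0 hc1).isNondecreasing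
  refine (eq_of_eqOn_pos hΓ hsplit.continuous fun t ht => ?_) ▸ hsplit
  rw [Function.comp_apply, normComp_splitAt hc0 hc1]
  split_ifs with htc
  · have hLt : L * t ≤ ℓ₀ := by rw [← hLc]; exact mul_le_mul_of_nonneg_left htc hL0.le
    rw [hΓeq t ht, mooreComp, if_pos hLt]
    congr 2
    field_simp
    rw [← hLc]
    ring
  · rw [not_le] at htc
    have hu0 : 0 ≤ ((t : ℝ) - c) / (1 - c) := div_nonneg (by linarith) (by linarith)
    have hu1 : ((t : ℝ) - c) / (1 - c) ≤ 1 := (div_le_one (by linarith)).2 (by linarith [t.2.2])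
    simp only [Γ', coe_toI hu0 hu1]
    rw [mul_div_cancel₀ _ (by linarith : (1 : ℝ) - c ≠ 0), add_sub_cancel, toI_coe_s14]

theorem isChainPath_of_mooreCompN (n : ℕ) (ℓ : Fin (n + 1) → ℝ) (γ : Fin (n + 1) → I → α)
    (φ : Fin (n + 1) → I → I) (hℓ : ∀ i, 0 < ℓ i) (hγ : ∀ i, γ i ∈ X.exec)
    (hφ : ∀ i, IsNondecreasing (φ i)) {Γ : I → α} (hΓ : Continuous Γ)
    (hΓeq : ∀ t : I, 0 < t →
      Γ t = mooreCompN n ℓ (fun i s => γ i (φ i (toI (s / ℓ i)))) ((∑ i, ℓ i) * t)) :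
    X.IsChainPath Γ := by
  have := X.t2
  induction n generalizing Γ with
  | zero =>
    have : Γ = γ 0 ∘ φ 0 := eq_of_eqOn_pos hΓ ((X.exec_cont _ (hγ 0)).comp (hφ 0).2) fun t ht => by
      rw [hΓeq t ht, Fin.sum_univ_one]
      change γ 0 (φ 0 (toI (ℓ 0 * t / ℓ 0))) = _
      rw [mul_div_cancel_left₀ _ (hℓ 0).ne', toI_coe_s14]
      rfl
    exact this ▸ (isChainPath_of_mem_exec (hγ 0)).comp (hφ 0)
  | succ n ih =>
    rw [Fin.sum_univ_succ] at hΓeq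
    refine isChainPath_of_mooreComp (hℓ 0)
      (lt_add_of_pos_right _ (Finset.sum_pos (fun i _ => hℓ _) Finset.univ_nonempty))
      ((isChainPath_of_mem_exec (hγ 0)).comp (hφ 0))
      (fun Γ' hΓ' h => ih _ _ _ (fun i => hℓ _) (fun i => hγ _) (fun i => hφ _) hΓ' fun u hu => by
        rw [h u hu, add_sub_cancel_left])
      hΓ hΓeq

end CellularMDSpace

theorem cellular_dPath_iff (X : CellularMDSpace α) (Γ : I → α) (hΓ : Continuous Γ) :
    Γ ∈ dPaths X.toMultipointedDSpace ↔
      ∃ (γ : I → α) (φ : I → I),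
        (γ ∈ X.exec ∨ ∃ x : α, γ = fun _ => x) ∧ IsNondecreasing φ ∧ Γ = γ ∘ φ := by
  constructor
  · rintro (⟨x, hx⟩ | ⟨n, ℓ, γ, φ, hℓ, hsum, hγ, hφ, hΓeq⟩)
    · exact ⟨fun _ => x, id, Or.inr ⟨x, rfl⟩, ⟨monotone_id, continuous_id⟩, funext hx⟩
    · obtain ⟨ε, θ, hε, hθ, rfl⟩ := (X.isChainPath_of_mooreCompN n ℓ γ φ hℓ hγ hφ hΓ
        fun t _ => by rw [hsum, one_mul]; exact hΓeq t).exists_exec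
      exact ⟨ε, θ, Or.inl hε, hθ, rfl⟩
  · rintro ⟨γ, φ, hγ | ⟨x, rfl⟩, hφ, rfl⟩
    · refine Or.inr ⟨0, fun _ => 1, fun _ => γ, fun _ => φ, fun _ => one_pos, by simp,
        fun _ => hγ, fun _ => hφ, fun t => ?_⟩
      simp [mooreCompN, toI_coe_s14]
    · exact Or.inl ⟨x, fun _ => rfl⟩

end
end
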